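/- arXiv:1903.00974 — 2 statements merged into one kernel-verified Lean document; each statement's English description precedes it below -/
import Mathlib

section
/- (Corollary 7, deterministic version: no log factor via weights α_t = t.) Let D be a compact convex subset of a real Hilbert space E with diameter at most B, and let ℒ : E → ℝ be differentiable and μ-strongly convex (μ > 0) with ‖∇ℒ(x)‖ ≤ G for all x ∈ D. Take α_t = t, let w_1 ∈ D be arbitrary, let x_t = (Σ_{i=1}^t i · w_i)/(Σ_{i=1}^t i), define ℓ_t(x) = ⟨∇ℒ(x_t), x⟩ + (μ/2)‖x − x_t‖², and choose w_{t+1} ∈ argmin_{w ∈ D} Σ_{i=1}^t i · ℓ_i(w) for each t. Then for every x⋆ ∈ D: (a) Σ_{t=1}^T t (ℓ_t(w_t) − ℓ_t(x⋆)) ≤ T (μB + G)²/μ, and (b) ℒ(x_T) − ℒ(x⋆) ≤ 2(μB + G)²/(μ(T+1)). -/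
/-!
Expanding around any point, each surrogate `ℓ_t` is an exact quadratic of curvature `μ` whose
gradient on `D` is bounded by `μB + G`, so the cumulative loss `Σ_{i ≤ n} i ℓ_i` is an exact
quadratic of curvature `μ n(n+1)/2`. Since `w_n` minimises `Σ_{i < n} i ℓ_i` over `D`, first-order
optimality leaves only the fresh term `n ℓ_n` to pay for, and completing the square shows that `w_n`
is within `n²(μB+G)² / (μ n(n+1)) ≤ (μB+G)²/μ` of the minimum of `Σ_{i ≤ n} i ℓ_i` over `D`.
Summing these gaps (be-the-leader) gives (a).

For (b), strong convexity of `ℒ` at `x_t`, used towards `x_{t-1}` and towards `x⋆`, together with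
`A_t x_t = A_{t-1} x_{t-1} + t w_t` (where `A_t = t(t+1)/2`), bounds
`A_t ℒ(x_t) - A_{t-1} ℒ(x_{t-1}) - t ℒ(x⋆)` by `t (ℓ_t(w_t) - ℓ_t(x⋆))`. Telescoping and dividing
by `A_T` turns (a) into (b).
-/

open scoped RealInnerProductSpace
open Finset Filter Topology

theorem sum_sub_le_sum_of_leader_gap {X : Type*} {D : Set X} (F : ℕ → X → ℝ) (w : ℕ → X)
    (δ : ℕ → ℝ) (N : ℕ) (hw : ∀ n < N, w (n + 1) ∈ D)
    (hgap : ∀ n < N, ∀ v ∈ D,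
      ∑ t ∈ Icc 1 (n + 1), F t (w (n + 1)) ≤ ∑ t ∈ Icc 1 (n + 1), F t v + δ (n + 1))
    {v : X} (hv : v ∈ D) :
    ∑ t ∈ Icc 1 N, (F t (w t) - F t v) ≤ ∑ t ∈ Icc 1 N, δ t := by
  induction N generalizing v with
  | zero => simp
  | succ N ih =>
    have hprev := ih (fun n hn => hw n (by omega)) (fun n hn => hgap n (by omega))
      (hw N N.lt_succ_self)
    have hlast := hgap N N.lt_succ_self v hv
    have hN : 1 ≤ N + 1 := by omega
    rw [sum_Icc_succ_top hN (fun t => F t (w (N + 1))), sum_Icc_succ_top hN] at hlast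
    rw [sum_sub_distrib] at hprev ⊢
    rw [sum_Icc_succ_top hN, sum_Icc_succ_top hN, sum_Icc_succ_top hN]
    linarith

section Surrogate

variable {E : Type*} [NormedAddCommGroup E] [InnerProductSpace ℝ E]

/-- The paper's `ℓ_t`, with `g = ∇ℒ(x_t)` and `z = x_t`. -/
noncomputable def quadSurrogate (μ : ℝ) (g z y : E) : ℝ := ⟪g, y⟫ + μ / 2 * ‖y - z‖ ^ 2

lemma quadSurrogate_eq_add_inner_add (μ : ℝ) (g z u v : E) :
    quadSurrogate μ g z v
      = quadSurrogate μ g z u + ⟪g + μ • (u - z), v - u⟫ + μ / 2 * ‖v - u‖ ^ 2 := by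
  have hvz : v - z = (v - u) + (u - z) := by abel
  rw [quadSurrogate, quadSurrogate, hvz, norm_add_sq_real, inner_add_left, real_inner_smul_left,
    real_inner_comm (u - z) (v - u), inner_sub_right g v u]
  ring

lemma sum_mul_quadSurrogate_eq {ι : Type*} (μ : ℝ) (s : Finset ι) (α : ι → ℝ) (g z : ι → E)
    (u v : E) :
    ∑ t ∈ s, α t * quadSurrogate μ (g t) (z t) v
      = ∑ t ∈ s, α t * quadSurrogate μ (g t) (z t) u
        + ⟪∑ t ∈ s, α t • (g t + μ • (u - z t)), v - u⟫
        + μ * (∑ t ∈ s, α t) / 2 * ‖v - u‖ ^ 2 := by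
  simp_rw [quadSurrogate_eq_add_inner_add μ _ _ u v, sum_inner, real_inner_smul_left, mul_add,
    sum_add_distrib, ← sum_mul]
  ring

lemma norm_add_smul_sub_le {g u z : E} {μ B G : ℝ} (hμ : 0 ≤ μ) (hg : ‖g‖ ≤ G)
    (huz : ‖u - z‖ ≤ B) : ‖g + μ • (u - z)‖ ≤ μ * B + G :=
  calc ‖g + μ • (u - z)‖ ≤ ‖g‖ + μ * ‖u - z‖ := by
        simpa [norm_smul, abs_of_nonneg hμ] using norm_add_le g (μ • (u - z))
    _ ≤ μ * B + G := by nlinarith [mul_le_mul_of_nonneg_left huz hμ]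

lemma IsMinOn.inner_nonneg_of_eq_add_inner_add_sq {φ : E → ℝ} {D : Set E} {u p : E} {κ : ℝ}
    (hmin : IsMinOn φ D u) (hD : Convex ℝ D) (hu : u ∈ D)
    (hφ : ∀ v, φ v = φ u + ⟪p, v - u⟫ + κ * ‖v - u‖ ^ 2) {v : E} (hv : v ∈ D) :
    0 ≤ ⟪p, v - u⟫ := by
  have hsegment : ∀ s ∈ Set.Ioc (0 : ℝ) 1, 0 ≤ ⟪p, v - u⟫ + s * (κ * ‖v - u‖ ^ 2) := by
    rintro s ⟨hs0, hs1⟩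
    have hle := isMinOn_iff.1 hmin _ (hD.add_smul_sub_mem hu hv ⟨hs0.le, hs1⟩)
    rw [hφ (u + s • (v - u)), add_sub_cancel_left, real_inner_smul_right, norm_smul,
      Real.norm_of_nonneg hs0.le] at hle
    have hmul : 0 ≤ s * (⟪p, v - u⟫ + s * (κ * ‖v - u‖ ^ 2)) := by linear_combination hle
    exact nonneg_of_mul_nonneg_right hmul hs0
  have hlim : Tendsto (fun s : ℝ => ⟪p, v - u⟫ + s * (κ * ‖v - u‖ ^ 2)) (𝓝[>] 0)
      (𝓝 ⟪p, v - u⟫) :=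
    (Continuous.tendsto' (by fun_prop) 0 _ (by simp)).mono_left nhdsWithin_le_nhds
  exact ge_of_tendsto hlim (eventually_of_mem (Ioc_mem_nhdsGT one_pos) hsegment)

lemma neg_sq_div_le_inner_add_sq {p r d : E} {c κ : ℝ} (hκ : 0 < κ) (hp : 0 ≤ ⟪p, d⟫)
    (hr : ‖r‖ ≤ c) : -(c ^ 2 / (2 * κ)) ≤ ⟪p + r, d⟫ + κ / 2 * ‖d‖ ^ 2 := by
  have hrd : -(c * ‖d‖) ≤ ⟪r, d⟫ :=
    (neg_le_neg (mul_le_mul_of_nonneg_right hr (norm_nonneg d))).trans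
      (neg_le_of_abs_le (abs_real_inner_le_norm r d))
  have hsquare : (κ * ‖d‖ - c) ^ 2 / (2 * κ) = κ / 2 * ‖d‖ ^ 2 - c * ‖d‖ + c ^ 2 / (2 * κ) := by
    field_simp
    ring
  have : 0 ≤ (κ * ‖d‖ - c) ^ 2 / (2 * κ) := by positivity
  rw [inner_add_left]
  linarith

theorem sum_mul_quadSurrogate_sub_le {D : Set E} (hD : Convex ℝ D) {μ C : ℝ} (hμ : 0 < μ)
    (g z w : ℕ → E) (α : ℕ → ℝ) (hα : ∀ t, 1 ≤ t → 0 < α t) (N : ℕ)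
    (hleader : ∀ n < N, w (n + 1) ∈ D ∧
      IsMinOn (fun v => ∑ t ∈ Icc 1 n, α t * quadSurrogate μ (g t) (z t) v) D (w (n + 1)))
    (hgrad : ∀ n < N, ‖g (n + 1) + μ • (w (n + 1) - z (n + 1))‖ ≤ C) {v : E} (hv : v ∈ D) :
    ∑ t ∈ Icc 1 N, α t * (quadSurrogate μ (g t) (z t) (w t) - quadSurrogate μ (g t) (z t) v)
      ≤ ∑ n ∈ Icc 1 N, (α n * C) ^ 2 / (2 * (μ * ∑ t ∈ Icc 1 n, α t)) := by
  simp_rw [mul_sub]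
  refine sum_sub_le_sum_of_leader_gap (fun t y => α t * quadSurrogate μ (g t) (z t) y) w _ N
    (fun n hn => (hleader n hn).1) (fun n hn v hv => ?_) hv
  obtain ⟨hu, hmin⟩ := hleader n hn
  have hopt := hmin.inner_nonneg_of_eq_add_inner_add_sq hD hu
    (fun v => sum_mul_quadSurrogate_eq μ _ α g z (w (n + 1)) v) hv
  have hcurv : 0 < μ * ∑ t ∈ Icc 1 (n + 1), α t :=
    mul_pos hμ (sum_pos (fun t ht => hα t (mem_Icc.1 ht).1) (nonempty_Icc.2 (by omega)))
  have hfresh : ‖α (n + 1) • (g (n + 1) + μ • (w (n + 1) - z (n + 1)))‖ ≤ α (n + 1) * C := by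
    rw [norm_smul, Real.norm_of_nonneg (hα _ (by omega)).le]
    exact mul_le_mul_of_nonneg_left (hgrad n hn) (hα _ (by omega)).le
  have hgap := neg_sq_div_le_inner_add_sq hcurv hopt hfresh
  rw [sum_mul_quadSurrogate_eq μ _ α g z (w (n + 1)) v,
    sum_Icc_succ_top (by omega) (fun t => α t • (g t + μ • (w (n + 1) - z t)))]
  linarith

variable {f : E → ℝ} {g : E → E} {μ : ℝ}

lemma add_mul_sub_le_mul_quadSurrogate_sub (hμ : 0 ≤ μ)
    (hstrong : ∀ y δ, f y + ⟪g y, δ⟫ + μ / 2 * ‖δ‖ ^ 2 ≤ f (y + δ))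
    {a b : ℝ} (ha : 0 ≤ a) (hb : 0 ≤ b) {y y' u z : E} (hy : (a + b) • y = a • y' + b • u) :
    (a + b) * f y - a * f y' - b * f z
      ≤ b * (quadSurrogate μ (g y) y u - quadSurrogate μ (g y) y z) := by
  have hy' := hstrong y (y' - y)
  have hz := hstrong y (z - y)
  rw [add_sub_cancel] at hy' hz
  have hbalance : a • (y' - y) = b • (y - u) := by
    linear_combination (norm := module) -hy
  have hinner : a * ⟪g y, y' - y⟫ = b * ⟪g y, y - u⟫ := by
    rw [← real_inner_smul_right, hbalance, real_inner_smul_right]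
  have hy'a := mul_le_mul_of_nonneg_left hy' ha
  have hzb := mul_le_mul_of_nonneg_left hz hb
  have : 0 ≤ a * (μ / 2 * ‖y' - y‖ ^ 2) := by positivity
  have : 0 ≤ b * (μ / 2 * ‖u - y‖ ^ 2) := by positivity
  rw [inner_sub_right (g y) y u] at hinner
  rw [inner_sub_right (g y) z y] at hzb
  rw [quadSurrogate, quadSurrogate]
  linarith

theorem sum_mul_sub_le_sum_mul_quadSurrogate_sub (hμ : 0 ≤ μ)
    (hstrong : ∀ y δ, f y + ⟪g y, δ⟫ + μ / 2 * ‖δ‖ ^ 2 ≤ f (y + δ))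
    (α : ℕ → ℝ) (hα : ∀ t, 1 ≤ t → 0 < α t) (w x : ℕ → E) (N : ℕ)
    (hx : ∀ n, 1 ≤ n → n ≤ N → x n = (Icc 1 n).centerMass α w) (z : E) :
    (∑ t ∈ Icc 1 N, α t) * (f (x N) - f z)
      ≤ ∑ t ∈ Icc 1 N,
          α t * (quadSurrogate μ (g (x t)) (x t) (w t) - quadSurrogate μ (g (x t)) (x t) z) := by
  have hαIcc : ∀ n, ∀ t ∈ Icc 1 n, 0 < α t := fun n t ht => hα t (mem_Icc.1 ht).1
  have hmass : ∀ n ≤ N, (∑ t ∈ Icc 1 n, α t) • x n = ∑ t ∈ Icc 1 n, α t • w t := by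
    rintro (_ | n) hn
    · simp
    · rw [hx (n + 1) (by omega) hn, centerMass,
        smul_inv_smul₀ (sum_pos (hαIcc _) (nonempty_Icc.2 (by omega))).ne']
  clear hx
  induction N with
  | zero => simp
  | succ N ih =>
    have hN : 1 ≤ N + 1 := by omega
    have hstep := add_mul_sub_le_mul_quadSurrogate_sub hμ hstrong
      (sum_nonneg fun t ht => (hαIcc N t ht).le) (hα (N + 1) hN).le (y' := x N) (z := z) (by
        rw [← sum_Icc_succ_top hN α, hmass (N + 1) le_rfl, sum_Icc_succ_top hN,
          hmass N (by omega)])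
    rw [sum_Icc_succ_top hN, sum_Icc_succ_top hN]
    linarith [ih fun n hn => hmass n (by omega)]

end Surrogate

lemma sum_Icc_natCast (n : ℕ) : ∑ i ∈ Icc 1 n, (i : ℝ) = n * (n + 1) / 2 := by
  induction n with
  | zero => simp
  | succ n ih =>
    rw [sum_Icc_succ_top (by omega), ih]
    push_cast
    ring

lemma sum_Icc_natCast_pos {n : ℕ} (hn : 1 ≤ n) : 0 < ∑ i ∈ Icc 1 n, (i : ℝ) :=
  sum_pos (fun _ hi => Nat.cast_pos.2 (mem_Icc.1 hi).1) (nonempty_Icc.2 hn)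

lemma sum_Icc_sq_div_sum_Icc_le {μ : ℝ} (C : ℝ) (hμ : 0 < μ) (N : ℕ) :
    ∑ n ∈ Icc 1 N, ((n : ℝ) * C) ^ 2 / (2 * (μ * ∑ t ∈ Icc 1 n, (t : ℝ))) ≤ N * (C ^ 2 / μ) := by
  have hterm : ∀ n ∈ Icc 1 N,
      ((n : ℝ) * C) ^ 2 / (2 * (μ * ∑ t ∈ Icc 1 n, (t : ℝ))) ≤ C ^ 2 / μ := by
    intro n hn
    have hn1 : (1 : ℝ) ≤ n := by exact_mod_cast (mem_Icc.1 hn).1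
    rw [sum_Icc_natCast, div_le_div_iff₀ (by positivity) hμ]
    nlinarith [mul_nonneg (mul_nonneg (sq_nonneg C) hμ.le) (n.cast_nonneg : (0 : ℝ) ≤ n)]
  simpa using sum_le_card_nsmul _ _ _ hterm

lemma le_two_mul_div_of_sum_Icc_mul_le {T : ℕ} (hT : 1 ≤ T) {d K μ : ℝ}
    (h : (∑ i ∈ Icc 1 T, (i : ℝ)) * d ≤ T * (K / μ)) : d ≤ 2 * K / (μ * (T + 1)) := by
  have hT' : (1 : ℝ) ≤ T := by exact_mod_cast hT
  calc d ≤ T * (K / μ) / (T * (T + 1) / 2) := by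
        rw [le_div_iff₀' (by positivity), ← sum_Icc_natCast]; exact h
    _ = 2 * K / (μ * (T + 1)) := by field_simp

theorem ftl_strongly_convex_weighted_general
    {E : Type*} [NormedAddCommGroup E] [InnerProductSpace ℝ E] [CompleteSpace E]
    (D : Set E) (hDconv : Convex ℝ D)
    (B : ℝ) (hdiam : ∀ u ∈ D, ∀ v ∈ D, ‖u - v‖ ≤ B)
    (μ G : ℝ) (hμ : 0 < μ)
    (f : E → ℝ)
    (hstrong : ∀ y δ : E, f (y + δ) ≥ f y + ⟪gradient f y, δ⟫ + μ / 2 * ‖δ‖ ^ 2)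
    (hgradbound : ∀ y ∈ D, ‖gradient f y‖ ≤ G)
    (T : ℕ) (hT : 1 ≤ T)
    (w : ℕ → E) (hw1 : w 1 ∈ D)
    (x : ℕ → E)
    (hx : ∀ t, 1 ≤ t → t ≤ T →
      x t = (∑ i ∈ Finset.Icc 1 t, (i : ℝ))⁻¹ • ∑ i ∈ Finset.Icc 1 t, (i : ℝ) • w i)
    (ℓ : ℕ → E → ℝ)
    (hℓ : ∀ t, 1 ≤ t → t ≤ T → ∀ y : E,
      ℓ t y = ⟪gradient f (x t), y⟫ + μ / 2 * ‖y - x t‖ ^ 2)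
    (hftl : ∀ t, 1 ≤ t → t < T → w (t + 1) ∈ D ∧
      ∀ v ∈ D, ∑ i ∈ Finset.Icc 1 t, (i : ℝ) * ℓ i (w (t + 1))
        ≤ ∑ i ∈ Finset.Icc 1 t, (i : ℝ) * ℓ i v)
    (xstar : E) (hxstar : xstar ∈ D) :
    (∑ t ∈ Finset.Icc 1 T, (t : ℝ) * (ℓ t (w t) - ℓ t xstar)
        ≤ T * (μ * B + G) ^ 2 / μ) ∧
    (f (x T) - f xstar ≤ 2 * (μ * B + G) ^ 2 / (μ * (T + 1))) := by
  have hsum : ∀ n ≤ T, ∀ F : ℕ → (E → ℝ) → ℝ, ∑ t ∈ Icc 1 n, F t (ℓ t)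
      = ∑ t ∈ Icc 1 n, F t (quadSurrogate μ (gradient f (x t)) (x t)) :=
    fun n hn F => sum_congr rfl fun t ht =>
      congrArg (F t) (funext (hℓ t (mem_Icc.1 ht).1 ((mem_Icc.1 ht).2.trans hn)))
  have hleader : ∀ n < T, w (n + 1) ∈ D ∧ IsMinOn
      (fun v => ∑ t ∈ Icc 1 n, (t : ℝ) * quadSurrogate μ (gradient f (x t)) (x t) v)
      D (w (n + 1)) := by
    rintro (_ | n) hn
    · simpa [isMinOn_const] using hw1
    refine ⟨(hftl (n + 1) (by omega) hn).1, isMinOn_iff.2 fun v hv => ?_⟩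
    have hmin := (hftl (n + 1) (by omega) hn).2 v hv
    rwa [hsum (n + 1) hn.le (fun t l => (t : ℝ) * l (w (n + 1 + 1))),
      hsum (n + 1) hn.le (fun t l => (t : ℝ) * l v)] at hmin
  have hxD : ∀ n < T, x (n + 1) ∈ D := fun n hn => by
    rw [hx (n + 1) (by omega) hn]
    refine hDconv.centerMass_mem (fun i _ => i.cast_nonneg) (sum_Icc_natCast_pos (by omega))
      fun i hi => ?_
    obtain ⟨j, rfl⟩ : ∃ j, i = j + 1 := ⟨i - 1, by grind⟩
    exact (hleader j (by grind)).1
  have hregret := (sum_mul_quadSurrogate_sub_le hDconv hμ (fun t => gradient f (x t)) x w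
    (fun t => (t : ℝ)) (fun t ht => Nat.cast_pos.2 ht) T hleader (fun n hn =>
      norm_add_smul_sub_le hμ.le (hgradbound _ (hxD n hn))
        (hdiam _ (hleader n hn).1 _ (hxD n hn))) hxstar).trans
    (sum_Icc_sq_div_sum_Icc_le (μ * B + G) hμ T)
  have hbatch := sum_mul_sub_le_sum_mul_quadSurrogate_sub hμ.le hstrong (fun t => (t : ℝ))
    (fun t ht => Nat.cast_pos.2 ht) w x T hx xstar
  rw [hsum T le_rfl (fun t l => (t : ℝ) * (l (w t) - l xstar)), mul_div_assoc]
  exact ⟨hregret, le_two_mul_div_of_sum_Icc_mul_le hT (hbatch.trans hregret)⟩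

/-- Corollary 7, deterministic version: no log factor via weights
`α_t = t`. -/
theorem ftl_strongly_convex_weighted
    {E : Type*} [NormedAddCommGroup E] [InnerProductSpace ℝ E] [CompleteSpace E]
    (D : Set E) (hDconv : Convex ℝ D) (hDcomp : IsCompact D)
    (B : ℝ) (hdiam : ∀ u ∈ D, ∀ v ∈ D, ‖u - v‖ ≤ B)
    (μ G : ℝ) (hμ : 0 < μ)
    (f : E → ℝ) (hdiff : Differentiable ℝ f)
    (hstrong : ∀ y δ : E, f (y + δ) ≥ f y + ⟪gradient f y, δ⟫ + μ / 2 * ‖δ‖ ^ 2)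
    (hgradbound : ∀ y ∈ D, ‖gradient f y‖ ≤ G)
    (T : ℕ) (hT : 1 ≤ T)
    (w : ℕ → E) (hw1 : w 1 ∈ D)
    (x : ℕ → E)
    (hx : ∀ t, 1 ≤ t → t ≤ T →
      x t = (∑ i ∈ Finset.Icc 1 t, (i : ℝ))⁻¹ • ∑ i ∈ Finset.Icc 1 t, (i : ℝ) • w i)
    (ℓ : ℕ → E → ℝ)
    (hℓ : ∀ t, 1 ≤ t → t ≤ T → ∀ y : E,
      ℓ t y = ⟪gradient f (x t), y⟫ + μ / 2 * ‖y - x t‖ ^ 2)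
    (hftl : ∀ t, 1 ≤ t → t < T → w (t + 1) ∈ D ∧
      ∀ v ∈ D, ∑ i ∈ Finset.Icc 1 t, (i : ℝ) * ℓ i (w (t + 1))
        ≤ ∑ i ∈ Finset.Icc 1 t, (i : ℝ) * ℓ i v)
    (xstar : E) (hxstar : xstar ∈ D) :
    (∑ t ∈ Finset.Icc 1 T, (t : ℝ) * (ℓ t (w t) - ℓ t xstar)
        ≤ T * (μ * B + G) ^ 2 / μ) ∧
    (f (x T) - f xstar ≤ 2 * (μ * B + G) ^ 2 / (μ * (T + 1))) :=
  ftl_strongly_convex_weighted_general D hDconv B hdiam μ G hμ f hstrong hgradbound T hT w hw1 x hx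
    ℓ hℓ hftl xstar hxstar
end

section
/- (Theorem 11, deterministic version: universality of the accelerated algorithm on non-smooth losses.) Let H be a real Hilbert space, B > 0, and D = {w ∈ H : ‖w‖ ≤ B/2}. Let ℒ : H → ℝ be convex and differentiable, and let x⋆ ∈ H satisfy ‖x⋆‖ ≤ B/2. Set α_t = t, β_t = α_{1:t} = t(t+1)/2, τ_t = α_t/α_{1:t}. Given w_1,…,w_T ∈ D, define recursively: y_0 = w_1, x_t = (1 − τ_t) y_{t−1} + τ_t w_t, g_t = ∇ℒ(x_t), η_t = 2B/√(1 + Σ_{i=1}^t β_i ‖g_i‖²), and y_t = x_t − η_t g_t. Suppose ‖g_t‖ ≤ G for all t, and let R_T = Σ_{t=1}^T α_t ⟨g_t, w_t − x⋆⟩. Then ℒ(y_T) − ℒ(x⋆) ≤ (R_T + 2B √(Σ_{t=1}^T β_t ‖∇ℒ(y_t)‖² · log(1 + G²T³))) / α_{1:T}. -/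
/-!
Anytime online-to-batch: since `β t • x t = β (t - 1) • y (t - 1) + t • w t`, the gradient
inequalities at `x t` against `y (t - 1)` and against `x⋆` add up to `t ⟪g t, w t - x⋆⟫`, which
telescopes to `β T (f (y T) - f x⋆) ≤ R_T + ∑ β t (f (y t) - f (x t))`. Convexity at `y t` bounds
each error term by `β t η t ‖∇f (y t)‖ ‖g t‖`; Cauchy–Schwarz and
`∑ a_t / (1 + a_{1:t}) ≤ log (1 + a_{1:T})` bound their sum by
`2B √(∑ β t ‖∇f (y t)‖² · log (1 + ∑ β t ‖g t‖²))`, and `∑ β t ‖g t‖² ≤ G² T³`.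
-/

open scoped RealInnerProductSpace

open Finset

theorem smul_one_sub_div_smul_add_div_smul {E : Type*} [AddCommGroup E] [Module ℝ E]
    {a b : ℝ} (hb : b ≠ 0) (y w : E) :
    b • ((1 - a / b) • y + (a / b) • w) = (b - a) • y + a • w := by
  rw [smul_add, smul_smul, smul_smul, mul_one_sub, mul_div_cancel₀ _ hb]

section Convex

variable {H : Type*} [NormedAddCommGroup H] [InnerProductSpace ℝ H] [CompleteSpace H]
  {f : H → ℝ}

theorem ConvexOn.sub_le_inner_of_hasGradientAt (hf : ConvexOn ℝ Set.univ f)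
    {u g : H} (hg : HasGradientAt f g u) (v : H) : f u - f v ≤ ⟪g, u - v⟫ := by
  set A : ℝ →ᵃ[ℝ] H := AffineMap.lineMap v u
  have hA : HasDerivAt A (u - v) 1 := by
    simpa [A, AffineMap.lineMap_linear] using A.hasDerivAt (x := 1)
  have hfA : HasDerivAt (f ∘ A) ⟪g, u - v⟫ 1 := by
    have hu : A 1 = u := AffineMap.lineMap_apply_one v u
    rw [← hu] at hg
    simpa using (hasGradientAt_iff_hasFDerivAt.mp hg).comp_hasDerivAt 1 hA
  have := (hf.comp_affineMap A).slope_le_of_hasDerivAt (Set.mem_univ 0) (Set.mem_univ 1)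
    one_pos hfA
  simpa [slope_def_field, A] using this

theorem ConvexOn.sub_le_mul_norm_mul_norm_of_eq_sub_smul (hf : ConvexOn ℝ Set.univ f)
    {x y g : H} (hfy : DifferentiableAt ℝ f y) {η : ℝ} (hη : 0 ≤ η) (hy : y = x - η • g) :
    f y - f x ≤ η * (‖gradient f y‖ * ‖g‖) := by
  have hgrad := hf.sub_le_inner_of_hasGradientAt hfy.hasGradientAt x
  have hcs : -⟪gradient f y, g⟫ ≤ ‖gradient f y‖ * ‖g‖ :=
    (neg_le_abs _).trans (abs_real_inner_le_norm _ _)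
  calc f y - f x ≤ ⟪gradient f y, y - x⟫ := hgrad
    _ = η * -⟪gradient f y, g⟫ := by
      rw [hy, sub_sub_cancel_left, inner_neg_right, real_inner_smul_right, mul_neg]
    _ ≤ η * (‖gradient f y‖ * ‖g‖) := mul_le_mul_of_nonneg_left hcs hη

theorem ConvexOn.anytime_online_to_batch (hf : ConvexOn ℝ Set.univ f)
    (α β : ℕ → ℝ) (hα : ∀ t, 0 ≤ α t) (hβ0 : β 0 = 0) (hβ : ∀ t, β (t + 1) = β t + α (t + 1))
    (w x y g : ℕ → H) (u : H) (n : ℕ)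
    (hx : ∀ t, 1 ≤ t → t ≤ n → β t • x t = β (t - 1) • y (t - 1) + α t • w t)
    (hg : ∀ t, 1 ≤ t → t ≤ n → HasGradientAt f (g t) (x t)) :
    β n * (f (y n) - f u)
      ≤ ∑ t ∈ Icc 1 n, α t * ⟪g t, w t - u⟫ + ∑ t ∈ Icc 1 n, β t * (f (y t) - f (x t)) := by
  have hβnn : ∀ t, 0 ≤ β t := fun t => by
    induction t with
    | zero => exact hβ0.ge
    | succ t ih => rw [hβ]; linarith [hα (t + 1)]
  induction n with
  | zero => simp [hβ0]
  | succ n ih =>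
    have ihn := ih (fun t h1 h2 => hx t h1 (by omega)) (fun t h1 h2 => hg t h1 (by omega))
    have hxn : (β n + α (n + 1)) • x (n + 1) = β n • y n + α (n + 1) • w (n + 1) := by
      simpa [hβ] using hx (n + 1) (by omega) le_rfl
    have hgn := hg (n + 1) (by omega) le_rfl
    have hcoupling : β n • (x (n + 1) - y n) + α (n + 1) • (x (n + 1) - u)
        = α (n + 1) • (w (n + 1) - u) := by
      rw [add_smul] at hxn
      linear_combination (norm := module) hxn
    have hlin : β n * (f (x (n + 1)) - f (y n)) + α (n + 1) * (f (x (n + 1)) - f u)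
        ≤ α (n + 1) * ⟪g (n + 1), w (n + 1) - u⟫ := by
      calc _ ≤ β n * ⟪g (n + 1), x (n + 1) - y n⟫ + α (n + 1) * ⟪g (n + 1), x (n + 1) - u⟫ :=
            add_le_add
              (mul_le_mul_of_nonneg_left (hf.sub_le_inner_of_hasGradientAt hgn _) (hβnn n))
              (mul_le_mul_of_nonneg_left (hf.sub_le_inner_of_hasGradientAt hgn _) (hα _))
        _ = α (n + 1) * ⟪g (n + 1), w (n + 1) - u⟫ := by
          rw [← real_inner_smul_right, ← real_inner_smul_right, ← inner_add_right, hcoupling,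
            real_inner_smul_right]
    have hsplit : β (n + 1) * (f (y (n + 1)) - f u)
        = β (n + 1) * (f (y (n + 1)) - f (x (n + 1)))
          + (β n * (f (x (n + 1)) - f (y n)) + α (n + 1) * (f (x (n + 1)) - f u))
          + β n * (f (y n) - f u) := by
      rw [hβ]; ring
    rw [sum_Icc_succ_top (by omega), sum_Icc_succ_top (by omega), hsplit]
    linarith

end Convex

theorem sum_div_one_add_partial_sum_le_log (a : ℕ → ℝ) (ha : ∀ i, 0 ≤ a i) (n : ℕ) :
    ∑ t ∈ Icc 1 n, a t / (1 + ∑ i ∈ Icc 1 t, a i) ≤ Real.log (1 + ∑ i ∈ Icc 1 n, a i) := by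
  induction n with
  | zero => simp
  | succ n ih =>
    rw [sum_Icc_succ_top (by omega), sum_Icc_succ_top (by omega)]
    set s := ∑ i ∈ Icc 1 n, a i
    have hs : 0 < 1 + s := by linarith [sum_nonneg fun i (_ : i ∈ Icc 1 n) => ha i]
    have hsa : 0 < 1 + (s + a (n + 1)) := by linarith [ha (n + 1)]
    have hstep : a (n + 1) / (1 + (s + a (n + 1)))
        ≤ Real.log (1 + (s + a (n + 1))) - Real.log (1 + s) := by
      have h := Real.one_sub_inv_le_log_of_pos (div_pos hsa hs)
      rw [Real.log_div hsa.ne' hs.ne', inv_div] at h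
      convert h using 1
      field_simp
      ring
    linarith

theorem sum_mul_adaptive_step_le (D : ℝ) (hD : 0 ≤ D) (β u v η : ℕ → ℝ) (hβ : ∀ t, 0 ≤ β t)
    (n : ℕ) (hη : ∀ t, 1 ≤ t → t ≤ n → η t = D / √(1 + ∑ i ∈ Icc 1 t, β i * u i ^ 2))
    (M : ℝ) (hM : ∑ t ∈ Icc 1 n, β t * u t ^ 2 ≤ M) :
    ∑ t ∈ Icc 1 n, β t * (η t * (v t * u t))
      ≤ D * √((∑ t ∈ Icc 1 n, β t * v t ^ 2) * Real.log (1 + M)) := by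
  set P := ∑ t ∈ Icc 1 n, β t * v t ^ 2
  have hP : 0 ≤ P := sum_nonneg fun t _ => mul_nonneg (hβ t) (sq_nonneg _)
  have hS : ∀ t, 0 ≤ ∑ i ∈ Icc 1 t, β i * u i ^ 2 :=
    fun t => sum_nonneg fun i _ => mul_nonneg (hβ i) (sq_nonneg _)
  have hsq : ∀ t ∈ Icc 1 n, (√(β t) * (η t * u t)) ^ 2
      = D ^ 2 * (β t * u t ^ 2 / (1 + ∑ i ∈ Icc 1 t, β i * u i ^ 2)) := by
    intro t ht
    obtain ⟨h1, h2⟩ := mem_Icc.mp ht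
    rw [hη t h1 h2, mul_pow, mul_pow, div_pow, Real.sq_sqrt (hβ t),
      Real.sq_sqrt (by linarith [hS t])]
    ring
  calc ∑ t ∈ Icc 1 n, β t * (η t * (v t * u t))
      = ∑ t ∈ Icc 1 n, (√(β t) * v t) * (√(β t) * (η t * u t)) := by
        refine sum_congr rfl fun t _ => ?_
        rw [mul_mul_mul_comm, Real.mul_self_sqrt (hβ t)]
        ring
    _ ≤ √(∑ t ∈ Icc 1 n, (√(β t) * v t) ^ 2) * √(∑ t ∈ Icc 1 n, (√(β t) * (η t * u t)) ^ 2) :=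
        Real.sum_mul_le_sqrt_mul_sqrt _ _ _
    _ = √P * √(D ^ 2 * ∑ t ∈ Icc 1 n, β t * u t ^ 2 / (1 + ∑ i ∈ Icc 1 t, β i * u i ^ 2)) := by
        rw [sum_congr rfl hsq, ← mul_sum]
        congr 2
        exact sum_congr rfl fun t _ => by rw [mul_pow, Real.sq_sqrt (hβ t)]
    _ ≤ √P * √(D ^ 2 * Real.log (1 + M)) := by
        gcongr
        calc _ ≤ Real.log (1 + ∑ t ∈ Icc 1 n, β t * u t ^ 2) :=
              sum_div_one_add_partial_sum_le_log _ (fun i => mul_nonneg (hβ i) (sq_nonneg _)) n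
          _ ≤ Real.log (1 + M) := Real.log_le_log (by linarith [hS n]) (by linarith)
    _ = D * √(P * Real.log (1 + M)) := by
        rw [Real.sqrt_mul (sq_nonneg D), Real.sqrt_sq hD, Real.sqrt_mul hP]
        ring

theorem sum_Icc_triangular_mul_sq_le (T : ℕ) (G : ℝ) (c : ℕ → ℝ) (hc : ∀ t, 0 ≤ c t)
    (hcG : ∀ t, 1 ≤ t → t ≤ T → c t ≤ G) :
    ∑ t ∈ Icc 1 T, (t : ℝ) * (t + 1) / 2 * c t ^ 2 ≤ G ^ 2 * (T : ℝ) ^ 3 := by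
  have hterm : ∀ t ∈ Icc 1 T, (t : ℝ) * (t + 1) / 2 * c t ^ 2 ≤ (T : ℝ) ^ 2 * G ^ 2 := by
    intro t ht
    obtain ⟨h1, h2⟩ := mem_Icc.mp ht
    have h1' : (1 : ℝ) ≤ t := by exact_mod_cast h1
    have h2' : (t : ℝ) ≤ T := by exact_mod_cast h2
    have hw : (t : ℝ) * (t + 1) / 2 ≤ (T : ℝ) ^ 2 := by nlinarith
    exact mul_le_mul hw (pow_le_pow_left₀ (hc t) (hcG t h1 h2) 2) (sq_nonneg _) (sq_nonneg _)
  calc _ ≤ #(Icc 1 T) • ((T : ℝ) ^ 2 * G ^ 2) := sum_le_card_nsmul _ _ _ hterm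
    _ = G ^ 2 * (T : ℝ) ^ 3 := by rw [Nat.card_Icc, nsmul_eq_mul, Nat.add_sub_cancel]; ring

theorem adaptive_acceleration_universal_deterministic_general
    {H : Type*} [NormedAddCommGroup H] [InnerProductSpace ℝ H] [CompleteSpace H]
    (B : ℝ) (hB : 0 < B)
    (G : ℝ)
    (f : H → ℝ) (hconv : ConvexOn ℝ Set.univ f) (hdiff : Differentiable ℝ f)
    (xstar : H)
    (T : ℕ) (hT : 1 ≤ T)
    (w : ℕ → H)
    (β τ η : ℕ → ℝ) (x y : ℕ → H) (g : ℕ → H)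
    (hβ : ∀ t, β t = (t : ℝ) * (t + 1) / 2)
    (hτ : ∀ t, 1 ≤ t → t ≤ T → τ t = (t : ℝ) / β t)
    (hxdef : ∀ t, 1 ≤ t → t ≤ T → x t = (1 - τ t) • y (t - 1) + τ t • w t)
    (hg : ∀ t, 1 ≤ t → t ≤ T → g t = gradient f (x t))
    (hη : ∀ t, 1 ≤ t → t ≤ T →
      η t = 2 * B / Real.sqrt (1 + ∑ i ∈ Finset.Icc 1 t, β i * ‖g i‖ ^ 2))
    (hydef : ∀ t, 1 ≤ t → t ≤ T → y t = x t - η t • g t)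
    (hG : ∀ t, 1 ≤ t → t ≤ T → ‖g t‖ ≤ G) :
    f (y T) - f xstar
      ≤ ((∑ t ∈ Finset.Icc 1 T, (t : ℝ) * ⟪g t, w t - xstar⟫)
          + 2 * B * Real.sqrt ((∑ t ∈ Finset.Icc 1 T, β t * ‖gradient f (y t)‖ ^ 2)
              * Real.log (1 + G ^ 2 * (T : ℝ) ^ 3)))
        / ((T : ℝ) * (T + 1) / 2) := by
  have hβnn : ∀ t, 0 ≤ β t := fun t => by rw [hβ]; positivity
  have hβpos : ∀ t, 1 ≤ t → 0 < β t := fun t ht => by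
    rw [hβ]; have : (1 : ℝ) ≤ t := by exact_mod_cast ht
    positivity
  have hx : ∀ t, 1 ≤ t → t ≤ T → β t • x t = β (t - 1) • y (t - 1) + (t : ℝ) • w t := by
    intro t h1 h2
    rw [hxdef t h1 h2, hτ t h1 h2, smul_one_sub_div_smul_add_div_smul (hβpos t h1).ne',
      hβ, hβ, Nat.cast_sub h1]
    congr 2
    push_cast; ring
  have hbatch := hconv.anytime_online_to_batch (fun t => (t : ℝ)) β (fun t => t.cast_nonneg)
    (by simp [hβ]) (fun t => by simp only [hβ]; push_cast; ring) w x y g xstar T hx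
    (fun t h1 h2 => hg t h1 h2 ▸ (hdiff _).hasGradientAt)
  have hsteps : ∑ t ∈ Icc 1 T, β t * (f (y t) - f (x t))
      ≤ ∑ t ∈ Icc 1 T, β t * (η t * (‖gradient f (y t)‖ * ‖g t‖)) := by
    refine sum_le_sum fun t ht => mul_le_mul_of_nonneg_left ?_ (hβnn t)
    obtain ⟨h1, h2⟩ := mem_Icc.mp ht
    refine hconv.sub_le_mul_norm_mul_norm_of_eq_sub_smul (hdiff _) ?_ (hydef t h1 h2)
    rw [hη t h1 h2]; positivity
  have hgrowth : ∑ t ∈ Icc 1 T, β t * ‖g t‖ ^ 2 ≤ G ^ 2 * (T : ℝ) ^ 3 := by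
    simpa only [← hβ] using
      sum_Icc_triangular_mul_sq_le T G (fun t => ‖g t‖) (fun t => norm_nonneg _) hG
  have hadaptive := sum_mul_adaptive_step_le (2 * B) (by positivity) β (fun t => ‖g t‖)
    (fun t => ‖gradient f (y t)‖) η hβnn T hη _ hgrowth
  rw [← hβ, le_div_iff₀ (hβpos T hT), mul_comm]
  linarith

/-- Theorem 11, deterministic version: universality of the accelerated
algorithm on non-smooth losses. -/
theorem adaptive_acceleration_universal_deterministic
    {H : Type*} [NormedAddCommGroup H] [InnerProductSpace ℝ H] [CompleteSpace H]
    (B : ℝ) (hB : 0 < B)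
    (G : ℝ)
    (f : H → ℝ) (hconv : ConvexOn ℝ Set.univ f) (hdiff : Differentiable ℝ f)
    (xstar : H) (hxstar : ‖xstar‖ ≤ B / 2)
    (T : ℕ) (hT : 1 ≤ T)
    (w : ℕ → H) (hw : ∀ t, 1 ≤ t → t ≤ T → ‖w t‖ ≤ B / 2)
    (β τ η : ℕ → ℝ) (x y : ℕ → H) (g : ℕ → H)
    (hβ : ∀ t, β t = (t : ℝ) * (t + 1) / 2)
    (hτ : ∀ t, 1 ≤ t → t ≤ T → τ t = (t : ℝ) / β t)
    (hy0 : y 0 = w 1)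
    (hxdef : ∀ t, 1 ≤ t → t ≤ T → x t = (1 - τ t) • y (t - 1) + τ t • w t)
    (hg : ∀ t, 1 ≤ t → t ≤ T → g t = gradient f (x t))
    (hη : ∀ t, 1 ≤ t → t ≤ T →
      η t = 2 * B / Real.sqrt (1 + ∑ i ∈ Finset.Icc 1 t, β i * ‖g i‖ ^ 2))
    (hydef : ∀ t, 1 ≤ t → t ≤ T → y t = x t - η t • g t)
    (hG : ∀ t, 1 ≤ t → t ≤ T → ‖g t‖ ≤ G) :
    f (y T) - f xstar
      ≤ ((∑ t ∈ Finset.Icc 1 T, (t : ℝ) * ⟪g t, w t - xstar⟫)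
          + 2 * B * Real.sqrt ((∑ t ∈ Finset.Icc 1 T, β t * ‖gradient f (y t)‖ ^ 2)
              * Real.log (1 + G ^ 2 * (T : ℝ) ^ 3)))
        / ((T : ℝ) * (T + 1) / 2) :=
  adaptive_acceleration_universal_deterministic_general B hB G f hconv hdiff xstar T hT w β τ η x y
    g hβ hτ hxdef hg hη hydef hG
end
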